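/- arXiv:1402.0442 — 4 statements merged into one kernel-verified Lean document; each statement's English description precedes it below -/
import Mathlib

section
/- Let 1 < p ≤ 9/8 and let l, n₁, n_k be positive integers with n₁ + n_k = 2l + 1 and n₁ ≤ l − 1 (hence n_k ≥ l + 2). If a₁, a_k > 0 satisfy l·(n₁a₁/l)^p + (l+1)·(n_k a_k/(l+1))^p ≥ n₁·a₁^p + n_k·a_k^p, then n_k·a_k^p / (n₁·a₁^p) > (l+1)/l. -/
/-!
Write `q = p - 1 ∈ (0, 1)`, `A = n₁ a₁ ^ p`, `B = n_k a_k ^ p` and `s = l - n₁ = n_k - (l + 1) > 0`.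
The hypothesis says `A (1 - (n₁ / l) ^ q) ≤ B ((n_k / (l + 1)) ^ q - 1)`, and Bernoulli's inequality
for the concave power `x ↦ x ^ q` bounds the left factor below by `q s / l` and the right factor
above by `q s / (l + 1)`. Hence `A / l < B / (l + 1)`.
-/

open Real

lemma mul_rpow_mul_div {m n a : ℝ} (p : ℝ) (hm : 0 < m) (hn : 0 < n) (ha : 0 ≤ a) :
    m * (n * a / m) ^ p = n * a ^ p * (n / m) ^ (p - 1) := by
  have hnm : 0 < n / m := div_pos hn hm
  rw [show n * a / m = n / m * a by ring, mul_rpow hnm.le ha, rpow_sub_one hnm.ne']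
  field_simp

lemma mul_rpow_add_div_lt {m t q : ℝ} (hm : 0 < m) (ht : -m ≤ t) (ht0 : t ≠ 0)
    (hq0 : 0 < q) (hq1 : q < 1) :
    m * ((m + t) / m) ^ q < m + q * t := by
  have hbern : (1 + t / m) ^ q < 1 + q * (t / m) :=
    rpow_one_add_lt_one_add_mul_self (by rw [le_div_iff₀ hm]; linarith)
      (div_ne_zero ht0 hm.ne') hq0 hq1
  rw [show (m + t) / m = 1 + t / m by field_simp]
  calc m * (1 + t / m) ^ q < m * (1 + q * (t / m)) := mul_lt_mul_of_pos_left hbern hm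
    _ = m + q * t := by field_simp

lemma div_lt_div_of_add_le_mul_add_mul {A B X Y l m c : ℝ} (hA : 0 < A) (hB : 0 ≤ B)
    (hl : 0 < l) (hm : 0 < m) (hc : 0 < c) (hX : c < l * (1 - X)) (hY : m * (Y - 1) < c)
    (h : A + B ≤ A * X + B * Y) :
    m / l < B / A := by
  rw [div_lt_div_iff₀ hl hA]
  have hAB : A * (1 - X) ≤ B * (Y - 1) := by linarith
  have hmc : m * A * c < l * B * c :=
    calc m * A * c < m * A * (l * (1 - X)) := by gcongr
      _ = m * l * (A * (1 - X)) := by ring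
      _ ≤ m * l * (B * (Y - 1)) := by gcongr
      _ = l * B * (m * (Y - 1)) := by ring
      _ ≤ l * B * c := by gcongr
  linarith [lt_of_mul_lt_mul_right hmc hc.le]

theorem stmt_4_general (p : ℝ) (hp1 : 1 < p) (hp2 : p ≤ 9 / 8)
    (l n₁ nk : ℕ) (hn₁ : 0 < n₁)
    (hsum : n₁ + nk = 2 * l + 1) (hn₁l : n₁ ≤ l - 1)
    (a₁ ak : ℝ) (ha₁ : 0 < a₁) (hak : 0 < ak)
    (h : (l : ℝ) * ((n₁ * a₁ / l) ^ p) + ((l : ℝ) + 1) * ((nk * ak / ((l : ℝ) + 1)) ^ p)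
        ≥ n₁ * a₁ ^ p + nk * ak ^ p) :
    (nk : ℝ) * ak ^ p / (n₁ * a₁ ^ p) > ((l : ℝ) + 1) / l := by
  have hs : (n₁ : ℝ) + 1 ≤ l := by exact_mod_cast (by omega : n₁ + 1 ≤ l)
  have hnk : (nk : ℝ) = l + 1 + (l - n₁) := by
    have : (n₁ : ℝ) + nk = 2 * l + 1 := by exact_mod_cast hsum
    linarith
  have hn₁pos : (0 : ℝ) < n₁ := by exact_mod_cast hn₁
  rw [mul_rpow_mul_div p (by linarith) hn₁pos ha₁.le,
    mul_rpow_mul_div p (by linarith) (by linarith) hak.le] at h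
  refine div_lt_div_of_add_le_mul_add_mul (c := (p - 1) * (l - n₁)) (by positivity)
    (by positivity) (by linarith) (by linarith) (mul_pos (by linarith) (by linarith)) ?_ ?_ h
  · have hdeficit := mul_rpow_add_div_lt (m := (l : ℝ)) (t := -(l - n₁)) (q := p - 1)
      (by linarith) (by linarith) (by linarith) (by linarith) (by linarith)
    rw [show (l : ℝ) + -(l - n₁) = n₁ by ring] at hdeficit
    linarith
  · have hsurplus := mul_rpow_add_div_lt (m := (l : ℝ) + 1) (t := l - n₁) (q := p - 1)
      (by linarith) (by linarith) (by linarith) (by linarith) (by linarith)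
    rw [← hnk] at hsurplus
    linarith

theorem stmt_4 (p : ℝ) (hp1 : 1 < p) (hp2 : p ≤ 9 / 8)
    (l n₁ nk : ℕ) (hl : 0 < l) (hn₁ : 0 < n₁) (hnk : 0 < nk)
    (hsum : n₁ + nk = 2 * l + 1) (hn₁l : n₁ ≤ l - 1)
    (a₁ ak : ℝ) (ha₁ : 0 < a₁) (hak : 0 < ak)
    (h : (l : ℝ) * ((n₁ * a₁ / l) ^ p) + ((l : ℝ) + 1) * ((nk * ak / ((l : ℝ) + 1)) ^ p)
        ≥ n₁ * a₁ ^ p + nk * ak ^ p) :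
    (nk : ℝ) * ak ^ p / (n₁ * a₁ ^ p) > ((l : ℝ) + 1) / l :=
  stmt_4_general p hp1 hp2 l n₁ nk hn₁ hsum hn₁l a₁ ak ha₁ hak h
end

section
/- Let p > 1 be real, l ≥ 2 an integer, and n₁, n_k positive integers with n₁ + n_k = 2l + 1, n₁ ≤ l − 1, n_k ≥ l + 2 (so n₁n_k ≤ (l−1)(l+2)). Let a₁, a_k > 0, set c = n₁a₁^p + n_k a_k^p and b = (c/(2l+1))^{1/p}. If moreover p > 9/8, then l(l+1)·b² > n₁·n_k·a₁·a_k. -/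
/-! Write `m = n₁ n_k`, `Q = (l-1)(l+2)`, so that `m ≤ Q`, `l(l+1) = Q + 2` and `(2l+1)² = 4Q + 9`.
Raising the claim to the `p`-th power and using AM–GM, `c² ≥ 4 m (a₁ a_k)^p`, it suffices that
`m^(p-1) (Q + 9/4) < (Q + 2)^p`. As `m ≤ Q`, this follows from Bernoulli's inequality
`(1 + 2/Q)^p ≥ 1 + 2p/Q > 1 + 9/(4Q)`, which is where `p > 9/8` enters. -/

open Real

lemma four_mul_mul_mul_rpow_le_sq (u v : ℝ) {x y : ℝ} (p : ℝ) (hx : 0 ≤ x) (hy : 0 ≤ y) :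
    4 * (u * v) * (x * y) ^ p ≤ (u * x ^ p + v * y ^ p) ^ 2 := by
  rw [mul_rpow hx hy]
  nlinarith [sq_nonneg (u * x ^ p - v * y ^ p)]

lemma rpow_sub_one_mul_add_lt_add_rpow {q s t p : ℝ} (hq : 0 < q) (ht : 0 ≤ t) (hp : 1 ≤ p)
    (hs : s < p * t) : q ^ (p - 1) * (q + s) < (q + t) ^ p := by
  have hqp : 0 < q ^ p := rpow_pos_of_pos hq p
  have bernoulli : 1 + s / q < (1 + t / q) ^ p :=
    calc 1 + s / q < 1 + p * (t / q) := by
          rw [← mul_div_assoc]; gcongr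
      _ ≤ (1 + t / q) ^ p :=
          one_add_mul_self_le_rpow_one_add (by linarith [div_nonneg ht hq.le]) hp
  calc q ^ (p - 1) * (q + s) = q ^ p * (1 + s / q) := by
        rw [rpow_sub_one hq.ne']; field_simp
    _ < q ^ p * (1 + t / q) ^ p := mul_lt_mul_of_pos_left bernoulli hqp
    _ = (q + t) ^ p := by
        rw [← mul_rpow hq.le (by positivity)]; congr 1; field_simp

lemma mul_le_of_add_eq_two_mul_add_one {x y l : ℝ} (hsum : x + y = 2 * l + 1)
    (hx : x ≤ l - 1) : x * y ≤ (l - 1) * (l + 2) := by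
  obtain rfl : y = 2 * l + 1 - x := by linarith
  nlinarith [mul_nonneg (sub_nonneg.2 hx) (by linarith : (0 : ℝ) ≤ l + 2 - x)]

theorem mul_mul_mul_lt_of_rpow_eq {p l x y a₁ a₂ b : ℝ} (hp : 9 / 8 < p) (hx : 0 < x)
    (hsum : x + y = 2 * l + 1) (hxl : x ≤ l - 1) (ha₁ : 0 < a₁) (ha₂ : 0 < a₂) (hb : 0 ≤ b)
    (hbp : b ^ p = (x * a₁ ^ p + y * a₂ ^ p) / (2 * l + 1)) :
    x * y * a₁ * a₂ < l * (l + 1) * b ^ 2 := by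
  set c := x * a₁ ^ p + y * a₂ ^ p
  have hy : 0 < y := by linarith
  have hm : 0 < x * y := mul_pos hx hy
  have hQ : 0 < (l - 1) * (l + 2) := mul_pos (by linarith) (by linarith)
  have hL : 0 < l * (l + 1) := mul_pos (by linarith) (by linarith)
  have hN : 0 < 2 * l + 1 := by linarith
  have hmQ : x * y ≤ (l - 1) * (l + 2) := mul_le_of_add_eq_two_mul_add_one hsum hxl
  have key : (x * y) ^ (p - 1) * (2 * l + 1) ^ 2 < 4 * (l * (l + 1)) ^ p := by
    have hQ_bound := rpow_sub_one_mul_add_lt_add_rpow (s := 9 / 4) (t := 2) (p := p) hQ (by norm_num)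
      (by linarith) (by linarith)
    have hmono := rpow_le_rpow hm.le hmQ (by linarith : 0 ≤ p - 1)
    calc (x * y) ^ (p - 1) * (2 * l + 1) ^ 2
        ≤ ((l - 1) * (l + 2)) ^ (p - 1) * (2 * l + 1) ^ 2 := by gcongr
      _ = 4 * (((l - 1) * (l + 2)) ^ (p - 1) * ((l - 1) * (l + 2) + 9 / 4)) := by ring
      _ < 4 * ((l - 1) * (l + 2) + 2) ^ p := by gcongr
      _ = 4 * (l * (l + 1)) ^ p := by ring_nf
  have amgm := four_mul_mul_mul_rpow_le_sq x y p ha₁.le ha₂.le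
  have hpow : (x * y * a₁ * a₂) ^ p * (2 * l + 1) ^ 2 < (l * (l + 1)) ^ p * c ^ 2 := by
    rw [mul_assoc (x * y), mul_rpow hm.le (by positivity),
      ← sub_add_cancel p 1, rpow_add_one hm.ne', sub_add_cancel]
    calc (x * y) ^ (p - 1) * (x * y) * (a₁ * a₂) ^ p * (2 * l + 1) ^ 2
        = (x * y) ^ (p - 1) * (2 * l + 1) ^ 2 * ((x * y) * (a₁ * a₂) ^ p) := by ring
      _ < 4 * (l * (l + 1)) ^ p * ((x * y) * (a₁ * a₂) ^ p) := by gcongr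
      _ = (l * (l + 1)) ^ p * (4 * (x * y) * (a₁ * a₂) ^ p) := by ring
      _ ≤ (l * (l + 1)) ^ p * c ^ 2 := by gcongr
  rw [← rpow_lt_rpow_iff (by positivity) (by positivity) (by linarith : 0 < p),
    mul_rpow hL.le (by positivity), ← rpow_pow_comm hb, hbp, div_pow,
    mul_div_assoc', lt_div_iff₀ (by positivity)]
  exact hpow

theorem stmt_14_general (p : ℝ) (l n₁ nk : ℕ)
    (hn₁ : 0 < n₁) (hsum : n₁ + nk = 2 * l + 1)
    (hn₁l : n₁ ≤ l - 1)
    (a₁ ak : ℝ) (ha₁ : 0 < a₁) (hak : 0 < ak)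
    (c b : ℝ) (hc : c = n₁ * a₁ ^ p + nk * ak ^ p)
    (hb : b = (c / (2 * (l : ℝ) + 1)) ^ (1 / p))
    (hp9 : 9 / 8 < p) :
    (l : ℝ) * ((l : ℝ) + 1) * b ^ 2 > (n₁ : ℝ) * nk * a₁ * ak := by
  have hsumR : (n₁ : ℝ) + nk = 2 * l + 1 := by exact_mod_cast hsum
  have hn₁lR : (n₁ : ℝ) ≤ l - 1 := by
    have : n₁ + 1 ≤ l := by omega
    rw [le_sub_iff_add_le]; exact_mod_cast this
  have hc₀ : 0 ≤ c / (2 * (l : ℝ) + 1) := by rw [hc]; positivity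
  refine mul_mul_mul_lt_of_rpow_eq hp9 (by exact_mod_cast hn₁) hsumR hn₁lR ha₁ hak
    (by rw [hb]; positivity) ?_
  rw [hb, one_div, rpow_inv_rpow hc₀ (by linarith), hc]

theorem stmt_14 (p : ℝ) (hp : 1 < p) (l n₁ nk : ℕ) (hl : 2 ≤ l)
    (hn₁ : 0 < n₁) (hnk : 0 < nk) (hsum : n₁ + nk = 2 * l + 1)
    (hn₁l : n₁ ≤ l - 1) (hnkl : l + 2 ≤ nk)
    (a₁ ak : ℝ) (ha₁ : 0 < a₁) (hak : 0 < ak)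
    (c b : ℝ) (hc : c = n₁ * a₁ ^ p + nk * ak ^ p)
    (hb : b = (c / (2 * (l : ℝ) + 1)) ^ (1 / p))
    (hp9 : 9 / 8 < p) :
    (l : ℝ) * ((l : ℝ) + 1) * b ^ 2 > (n₁ : ℝ) * nk * a₁ * ak :=
  stmt_14_general p l n₁ nk hn₁ hsum hn₁l a₁ ak ha₁ hak c b hc hb hp9
end

section
/- Let l ≥ 2 be an integer and let n₁, n_k be integers with 1 ≤ n₁ ≤ l − 1, n_k ≥ l + 1, n₁ + n_k = 2l, and let a₁, a_k ≥ 0, b > 0 reals with n₁a₁ + n_k a_k ≤ 2lb and a₁a_k ≤ l²b²/(n₁n_k). If additionally n₁n_k ≥ 3, then C(n₁,2)·n_k·a₁²·a_k + C(n_k,2)·n₁·a_k²·a₁ < l²(l−1)·b³. -/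
/-!
Writing `t = √(a₁ a_k)`, `N = n₁ n_k` and `L = l b`, the left side is
`(N t² / 2) (n₁ a₁ + n_k a_k - a₁ - a_k) ≤ N t² (L - t)` by AM-GM. The cubic `z² (L - z)` is
increasing on `[0, 2L/3]`, and `t ≤ L / √N ≤ 2L/3` because `N ≥ 3`, so the left side is at most
`L² (L - L/√N)`. Finally `N = l² - (l - n₁)² < l²`, so `L / √N > b`.
-/

open Real

lemma sq_mul_sub_le_sq_mul_sub {s t L : ℝ} (hs : 0 ≤ s) (hst : s ≤ t) (ht : 3 * t ≤ 2 * L) :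
    s ^ 2 * (L - s) ≤ t ^ 2 * (L - t) := by
  have hfactor : 0 ≤ L * (t + s) - (t ^ 2 + t * s + s ^ 2) := by
    nlinarith [mul_le_mul_of_nonneg_right ht (by linarith : 0 ≤ t + s),
      mul_nonneg (sub_nonneg.2 hst) (by linarith : 0 ≤ t + 2 * s)]
  have hdiff : t ^ 2 * (L - t) - s ^ 2 * (L - s) =
      (t - s) * (L * (t + s) - (t ^ 2 + t * s + s ^ 2)) := by
    ring
  nlinarith [mul_nonneg (sub_nonneg.2 hst) hfactor]

lemma two_mul_sqrt_mul_le_add {x y : ℝ} (hx : 0 ≤ x) (hy : 0 ≤ y) : 2 * √(x * y) ≤ x + y := by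
  nlinarith [sq_nonneg (x - y), sq_sqrt (mul_nonneg hx hy), sqrt_nonneg (x * y)]

lemma sqrt_mul_le_div_sqrt {x y L N : ℝ} (hL : 0 ≤ L) (h : x * y ≤ L ^ 2 / N) :
    √(x * y) ≤ L / √N := by
  calc √(x * y) ≤ √(L ^ 2 / N) := sqrt_le_sqrt h
    _ = L / √N := by rw [sqrt_div (sq_nonneg L), sqrt_sq hL]

lemma choose_two_mul_add_choose_two_mul (n m x y : ℝ) :
    n * (n - 1) / 2 * m * x ^ 2 * y + m * (m - 1) / 2 * n * y ^ 2 * x =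
      n * m * (x * y) / 2 * (n * x + m * y - (x + y)) := by
  ring

lemma choose_two_mul_add_choose_two_mul_le {n m x y L : ℝ} (hx : 0 ≤ x) (hy : 0 ≤ y)
    (hnm : 0 ≤ n * m) (h : n * x + m * y ≤ 2 * L) :
    n * (n - 1) / 2 * m * x ^ 2 * y + m * (m - 1) / 2 * n * y ^ 2 * x ≤
      n * m * √(x * y) ^ 2 * (L - √(x * y)) := by
  rw [choose_two_mul_add_choose_two_mul]
  nth_rewrite 1 [← sq_sqrt (mul_nonneg hx hy)]
  have hamgm := two_mul_sqrt_mul_le_add hx hy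
  have hcoef : 0 ≤ n * m * √(x * y) ^ 2 := by positivity
  nlinarith [mul_le_mul_of_nonneg_left (by linarith : n * x + m * y - (x + y) ≤ 2 * (L - √(x * y)))
    hcoef]

lemma choose_two_mul_add_choose_two_mul_le_of_mul_le {n m x y L : ℝ} (hx : 0 ≤ x) (hy : 0 ≤ y)
    (hL : 0 ≤ L) (hnm : 9 / 4 ≤ n * m) (h₁ : n * x + m * y ≤ 2 * L)
    (h₂ : x * y ≤ L ^ 2 / (n * m)) :
    n * (n - 1) / 2 * m * x ^ 2 * y + m * (m - 1) / 2 * n * y ^ 2 * x ≤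
      L ^ 2 * (L - L / √(n * m)) := by
  have hnm₀ : 0 < n * m := by linarith
  have hsqrt : 3 / 2 ≤ √(n * m) := (le_sqrt (by norm_num) hnm₀.le).2 (by linarith)
  have hsqrt₀ : 0 < √(n * m) := by linarith
  have hT : 3 * (L / √(n * m)) ≤ 2 * L := by
    rw [mul_div_assoc', div_le_iff₀ hsqrt₀]
    nlinarith
  calc _ ≤ n * m * √(x * y) ^ 2 * (L - √(x * y)) :=
        choose_two_mul_add_choose_two_mul_le hx hy hnm₀.le h₁
    _ ≤ n * m * (L / √(n * m)) ^ 2 * (L - L / √(n * m)) := by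
        rw [mul_assoc, mul_assoc (n * m)]
        exact mul_le_mul_of_nonneg_left
          (sq_mul_sub_le_sq_mul_sub (sqrt_nonneg _) (sqrt_mul_le_div_sqrt hL h₂) hT) hnm₀.le
    _ = L ^ 2 * (L - L / √(n * m)) := by
        rw [div_pow, sq_sqrt hnm₀.le, mul_div_cancel₀ _ hnm₀.ne']

lemma mul_lt_sq_of_add_eq_two_mul {n m l : ℝ} (hsum : n + m = 2 * l) (hlm : l < m) :
    n * m < l ^ 2 := by
  obtain rfl : n = 2 * l - m := by linarith
  nlinarith [sq_pos_of_pos (sub_pos.2 hlm)]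

lemma sq_mul_sub_div_sqrt_lt {l b N : ℝ} (hb : 0 < b) (hN : 0 < N) (hl : 0 ≤ l)
    (hNl : N < l ^ 2) :
    (l * b) ^ 2 * (l * b - l * b / √N) < l ^ 2 * (l - 1) * b ^ 3 := by
  have hsqrt₀ : 0 < √N := sqrt_pos.2 hN
  have hsqrt : √N < l := by
    simpa [sqrt_sq hl] using sqrt_lt_sqrt hN.le hNl
  have hb_lt : b < l * b / √N := by
    rw [lt_div_iff₀ hsqrt₀]
    nlinarith
  have hlb : 0 < (l * b) ^ 2 := by
    have : 0 < l := hsqrt₀.trans hsqrt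
    positivity
  calc (l * b) ^ 2 * (l * b - l * b / √N) < (l * b) ^ 2 * (l * b - b) := by gcongr
    _ = l ^ 2 * (l - 1) * b ^ 3 := by ring

theorem stmt_15_general (l n₁ nk : ℕ)
    (hnk : l + 1 ≤ nk) (hsum : n₁ + nk = 2 * l)
    (a₁ ak b : ℝ) (ha₁ : 0 ≤ a₁) (hak : 0 ≤ ak) (hb : 0 < b)
    (h1 : (n₁ : ℝ) * a₁ + nk * ak ≤ 2 * l * b)
    (h2 : a₁ * ak ≤ (l : ℝ) ^ 2 * b ^ 2 / (n₁ * nk))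
    (h3 : 3 ≤ n₁ * nk) :
    ((n₁ : ℝ) * ((n₁ : ℝ) - 1) / 2) * nk * a₁ ^ 2 * ak +
      ((nk : ℝ) * ((nk : ℝ) - 1) / 2) * n₁ * ak ^ 2 * a₁ <
      (l : ℝ) ^ 2 * ((l : ℝ) - 1) * b ^ 3 := by
  have hN : (3 : ℝ) ≤ n₁ * nk := by exact_mod_cast h3
  have hNl : (n₁ : ℝ) * nk < (l : ℝ) ^ 2 :=
    mul_lt_sq_of_add_eq_two_mul (by exact_mod_cast hsum) (by exact_mod_cast hnk)
  calc _ ≤ ((l : ℝ) * b) ^ 2 * (l * b - l * b / √(n₁ * nk)) :=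
        choose_two_mul_add_choose_two_mul_le_of_mul_le ha₁ hak (by positivity) (by linarith)
          (by linarith) (by rwa [mul_pow])
    _ < (l : ℝ) ^ 2 * ((l : ℝ) - 1) * b ^ 3 :=
        sq_mul_sub_div_sqrt_lt hb (by linarith) (Nat.cast_nonneg l) hNl

theorem stmt_15 (l n₁ nk : ℕ) (hl : 2 ≤ l) (hn₁ : 1 ≤ n₁) (hn₁l : n₁ ≤ l - 1)
    (hnk : l + 1 ≤ nk) (hsum : n₁ + nk = 2 * l)
    (a₁ ak b : ℝ) (ha₁ : 0 ≤ a₁) (hak : 0 ≤ ak) (hb : 0 < b)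
    (h1 : (n₁ : ℝ) * a₁ + nk * ak ≤ 2 * l * b)
    (h2 : a₁ * ak ≤ (l : ℝ) ^ 2 * b ^ 2 / (n₁ * nk))
    (h3 : 3 ≤ n₁ * nk) :
    ((n₁ : ℝ) * ((n₁ : ℝ) - 1) / 2) * nk * a₁ ^ 2 * ak +
      ((nk : ℝ) * ((nk : ℝ) - 1) / 2) * n₁ * ak ^ 2 * a₁ <
      (l : ℝ) ^ 2 * ((l : ℝ) - 1) * b ^ 3 :=
  stmt_15_general l n₁ nk hnk hsum a₁ ak b ha₁ hak hb h1 h2 h3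
end

section
/- Let l ≥ 2 be an integer, let n₁, n_k be integers with 1 ≤ n₁ < n_k, n₁ + n_k = 2l, and let a₁, a_k ≥ 0 with c = n₁a₁ + n_k a_k > 0. Then n₁n_k·a₁a_k·(n₁a₁ + n_k a_k − a₁ − a_k) < (c³/4)·(1 − 1/l). -/
private lemma core_ineq (r L s c : ℝ) (hr : 0 < r) (hrL : r < L) (hL : 2 ≤ L)
    (hs : 0 < s) (hc : 0 < c) (hA : 4*(r^2)*s^2 ≤ c^2) :
    4*L*(r^2*s^2*(c-2*s)) < c^3*(L-1) := by
  have h1 : 0 ≤ c - 2*(r*s) := by nlinarith [mul_pos hr hs]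
  have h2 : 0 ≤ (L-1)*c^2 + 2*(L-1)*c*(r*s) - 4*(r*s)^2 := by
    nlinarith [mul_nonneg (mul_nonneg (by linarith : (0:ℝ) ≤ L - 1) hc.le) (mul_pos hr hs).le]
  have h3 : 0 < r^2*s^3*(L - r) := by
    have : 0 < L - r := by linarith
    positivity
  nlinarith [mul_nonneg h1 h2, h3]

theorem stmt_17 (l n₁ nk : ℕ) (hl : 2 ≤ l) (hn₁ : 1 ≤ n₁) (hlt : n₁ < nk)
    (hsum : n₁ + nk = 2 * l)
    (a₁ ak : ℝ) (ha₁ : 0 ≤ a₁) (hak : 0 ≤ ak)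
    (c : ℝ) (hc : c = (n₁ : ℝ) * a₁ + nk * ak) (hcpos : 0 < c) :
    (n₁ : ℝ) * nk * (a₁ * ak) * ((n₁ : ℝ) * a₁ + nk * ak - a₁ - ak) <
      (c ^ 3 / 4) * (1 - 1 / l) := by
  have hL2 : (2:ℝ) ≤ (l:ℝ) := by exact_mod_cast hl
  have hLpos : (0:ℝ) < (l:ℝ) := by linarith
  have hN1 : (1:ℝ) ≤ (n₁:ℝ) := by exact_mod_cast hn₁
  have hK2 : (2:ℝ) ≤ (nk:ℝ) := by exact_mod_cast (by omega : 2 ≤ nk)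
  -- integer fact: n₁ * nk + 1 ≤ l^2
  have hstep : n₁ + 2 ≤ nk := by omega
  have hint : n₁ * nk + 1 ≤ l * l := by nlinarith [hsum, hstep]
  have hNK : (n₁:ℝ) * nk + 1 ≤ (l:ℝ)^2 := by
    have := (Nat.cast_le (α := ℝ)).2 hint
    push_cast at this
    nlinarith [this]
  have hNKpos : (0:ℝ) < (n₁:ℝ) * nk := by nlinarith
  have hr2 : Real.sqrt ((n₁:ℝ) * nk) ^ 2 = (n₁:ℝ) * nk := Real.sq_sqrt hNKpos.le
  have hrpos : 0 < Real.sqrt ((n₁:ℝ) * nk) := Real.sqrt_pos.2 hNKpos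
  have hrL : Real.sqrt ((n₁:ℝ) * nk) < (l:ℝ) := by
    have h1 : Real.sqrt ((n₁:ℝ) * nk) < Real.sqrt ((l:ℝ)^2) :=
      Real.sqrt_lt_sqrt hNKpos.le (by nlinarith)
    rwa [Real.sqrt_sq hLpos.le] at h1
  have hs0 : 0 ≤ Real.sqrt (a₁ * ak) := Real.sqrt_nonneg _
  have hs2 : Real.sqrt (a₁ * ak) ^ 2 = a₁ * ak := Real.sq_sqrt (mul_nonneg ha₁ hak)
  have hsum2 : 2 * Real.sqrt (a₁ * ak) ≤ a₁ + ak := by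
    have h1 : Real.sqrt (a₁ * ak) = Real.sqrt a₁ * Real.sqrt ak := Real.sqrt_mul ha₁ ak
    have h2 : Real.sqrt a₁ ^ 2 = a₁ := Real.sq_sqrt ha₁
    have h3 : Real.sqrt ak ^ 2 = ak := Real.sq_sqrt hak
    nlinarith [sq_nonneg (Real.sqrt a₁ - Real.sqrt ak)]
  -- abstract the square roots
  obtain ⟨r, hrdef⟩ : ∃ r, Real.sqrt ((n₁:ℝ) * nk) = r := ⟨_, rfl⟩
  obtain ⟨s, hsdef⟩ : ∃ s, Real.sqrt (a₁ * ak) = s := ⟨_, rfl⟩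
  rw [hrdef] at hr2 hrpos hrL
  rw [hsdef] at hs0 hs2 hsum2
  -- AM-GM: 4 N K a₁ ak ≤ c^2
  have hA : 4 * r^2 * s^2 ≤ c^2 := by
    rw [hr2, hs2]
    nlinarith [sq_nonneg ((n₁:ℝ) * a₁ - (nk:ℝ) * ak), hc]
  -- rewrite RHS
  have hRHS : (c ^ 3 / 4) * (1 - 1 / (l:ℝ)) = c^3 * ((l:ℝ) - 1) / (4 * (l:ℝ)) := by
    field_simp
  rw [hRHS]
  rcases eq_or_lt_of_le hs0 with hs0' | hspos
  · -- s = 0, so a₁ * ak = 0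
    have hzero : a₁ * ak = 0 := by rw [← hs2, ← hs0']; ring
    rw [hzero]
    have hpos : (0:ℝ) < c^3 * ((l:ℝ) - 1) / (4 * (l:ℝ)) := by
      apply div_pos (mul_pos (by positivity) (by linarith)) (by linarith)
    linarith [hpos]
  · -- main case
    have hcore := core_ineq r (l:ℝ) s c hrpos hrL hL2 hspos hcpos hA
    have hmono : (n₁:ℝ) * nk * (a₁ * ak) * ((n₁:ℝ) * a₁ + nk * ak - a₁ - ak)
        ≤ r^2 * s^2 * (c - 2*s) := by
      rw [hr2, hs2, hc]
      have hfac : 0 ≤ (n₁:ℝ) * nk * (a₁ * ak) := by positivity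
      exact mul_le_mul_of_nonneg_left (by linarith) hfac
    rw [lt_div_iff₀ (by linarith : (0:ℝ) < 4 * (l:ℝ))]
    calc (n₁:ℝ) * nk * (a₁ * ak) * ((n₁:ℝ) * a₁ + nk * ak - a₁ - ak) * (4 * (l:ℝ))
        ≤ r^2 * s^2 * (c - 2*s) * (4 * (l:ℝ)) :=
          mul_le_mul_of_nonneg_right hmono (by linarith)
      _ = 4 * (l:ℝ) * (r^2 * s^2 * (c - 2*s)) := by ring
      _ < c^3 * ((l:ℝ) - 1) := hcore
end
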